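/- (Part L of the proof of Theorem 1.) Let N ≥ 2 and 0 < k < N. Then the sum, over all paths w : Fin N → Bool with w(0) = false, w(N−1) = true, and exactly k visits to S1, of the weight of w equals ∑_{j=1}^{min(k, N−k)} C(k−1, j−1)·p11^{k−j}·p10^{j−1}·C(N−k−1, j−1)·p01^{j}·p00^{N−k−j}. -/

import Mathlib

open Finset

/-- Transition probability of the two-state chain: `false` is S0, `true` is S1. -/
def mcStep (p00 p01 p10 p11 : ℝ) : Bool → Bool → ℝ
  | false, false => p00
  | false, true  => p01
  | true,  false => p10
  | true,  true  => p11

/-- Weight of a path `w : Fin N → Bool`: product over `i = 0, …, N-2` of the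
transition probability from `w i` to `w (i+1)`; equals `1` when `N = 1`. -/
def pathWeight (p00 p01 p10 p11 : ℝ) {N : ℕ} (w : Fin N → Bool) : ℝ :=
  ∏ i : Fin (N - 1),
    mcStep p00 p01 p10 p11
      (w ⟨i.val, by have := i.isLt; omega⟩)
      (w ⟨i.val + 1, by have := i.isLt; omega⟩)

/-- Number of visits to S1 (i.e. `true`) of a path. -/
def visitsS1 {N : ℕ} (w : Fin N → Bool) : ℕ :=
  (Finset.univ.filter fun i : Fin N => w i = true).card

/-- Number of descents (indices `i ≤ N-2` with `w i = true` and `w (i+1) = false`). -/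
def descents {N : ℕ} (w : Fin N → Bool) : ℕ :=
  (Finset.univ.filter fun i : Fin (N - 1) =>
    w ⟨i.val, by have := i.isLt; omega⟩ = true ∧
    w ⟨i.val + 1, by have := i.isLt; omega⟩ = false).card

/-- Number of ascents (indices `i ≤ N-2` with `w i = false` and `w (i+1) = true`). -/
def ascents {N : ℕ} (w : Fin N → Bool) : ℕ :=
  (Finset.univ.filter fun i : Fin (N - 1) =>
    w ⟨i.val, by have := i.isLt; omega⟩ = false ∧
    w ⟨i.val + 1, by have := i.isLt; omega⟩ = true).card

/-!
Peeling off the last step of a path gives a linear recurrence, indexed by the last state, for the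
total weight of the paths from S0 with a given length, end state and number of visits to S1. With
`a + 1` visits to S1 and `b + 1` to S0, the closed forms for both end states satisfy the same
recurrence by Pascal's rule. In them `j` is the number of runs of S1: these split the visits to S1
in `C(a, j - 1)` ways, and the `j` runs of S0 split the visits to S0 in `C(b, j - 1)` ways (for a
path ending in S0 there are `j + 1` runs of S0 and `C(b, j)` ways).
-/

section
variable {R : Type*} [CommSemiring R]

-- the coefficient of `X ^ i` in `(X + x) ^ a`
def choosePow (x : R) (a i : ℕ) : R := a.choose i * x ^ (a - i)

theorem choosePow_zero_right (x : R) (a : ℕ) : choosePow x a 0 = x ^ a := by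
  simp [choosePow]

theorem choosePow_eq_zero_of_lt (x : R) {a i : ℕ} (h : a < i) : choosePow x a i = 0 := by
  simp [choosePow, Nat.choose_eq_zero_of_lt h]

theorem choosePow_succ_succ (x : R) (a i : ℕ) :
    choosePow x (a + 1) (i + 1) = choosePow x a i + x * choosePow x a (i + 1) := by
  rw [choosePow, choosePow, choosePow, Nat.choose_succ_succ, Nat.cast_add, Nat.succ_sub_succ]
  rcases lt_or_ge i a with h | h
  · rw [show a - i = a - (i + 1) + 1 by omega, pow_succ]
    ring
  · rw [Nat.choose_eq_zero_of_lt (by omega : a < i + 1)]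
    simp

end

section
variable (p00 p01 p10 p11 : ℝ)

theorem visitsS1_snoc {n : ℕ} (w : Fin (n + 1) → Bool) (b : Bool) :
    visitsS1 (Fin.snoc w b : Fin (n + 2) → Bool) = visitsS1 w + b.toNat := by
  simp only [visitsS1, Finset.card_filter, Fin.sum_univ_castSucc, Fin.snoc_castSucc,
    Fin.snoc_last]
  cases b <;> rfl

theorem pathWeight_snoc {n : ℕ} (w : Fin (n + 1) → Bool) (b : Bool) :
    pathWeight p00 p01 p10 p11 (Fin.snoc w b : Fin (n + 2) → Bool) =
      pathWeight p00 p01 p10 p11 w * mcStep p00 p01 p10 p11 (w (Fin.last n)) b := by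
  rw [pathWeight, pathWeight]
  change ∏ i : Fin (n + 1), _ = _
  rw [Fin.prod_univ_castSucc]
  congr 1
  · refine Finset.prod_congr rfl fun i _ => ?_
    simp [Fin.snoc]
  · simp [Fin.snoc, Fin.last]

def weightSum (c : Bool) (n k : ℕ) : ℝ :=
  ∑ w ∈ Finset.univ.filter (fun w : Fin (n + 1) → Bool =>
      w 0 = false ∧ w (Fin.last n) = c ∧ visitsS1 w = k),
    pathWeight p00 p01 p10 p11 w

theorem weightSum_succ (c : Bool) (n k : ℕ) :
    weightSum p00 p01 p10 p11 c (n + 1) (k + c.toNat) =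
      mcStep p00 p01 p10 p11 false c * weightSum p00 p01 p10 p11 false n k +
        mcStep p00 p01 p10 p11 true c * weightSum p00 p01 p10 p11 true n k := by
  have hsnoc : weightSum p00 p01 p10 p11 c (n + 1) (k + c.toNat) =
      ∑ w : Fin (n + 1) → Bool, if w 0 = false ∧ visitsS1 w = k then
        pathWeight p00 p01 p10 p11 w * mcStep p00 p01 p10 p11 (w (Fin.last n)) c else 0 := by
    rw [weightSum, Finset.sum_filter,
      ← (Fin.snocEquiv fun _ => Bool).sum_comp, Fintype.sum_prod_type_right]
    refine Finset.sum_congr rfl fun w _ => ?_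
    have h0 (b : Bool) : (Fin.snoc w b : Fin (n + 2) → Bool) 0 = w 0 :=
      Fin.snoc_castSucc (α := fun _ => Bool) b w 0
    cases c <;> simp [Fin.snocEquiv, h0, visitsS1_snoc, pathWeight_snoc]
  rw [hsnoc, weightSum, weightSum, Finset.sum_filter, Finset.sum_filter, Finset.mul_sum,
    Finset.mul_sum, ← Finset.sum_add_distrib]
  refine Finset.sum_congr rfl fun w _ => ?_
  cases w (Fin.last n) <;> split_ifs <;> simp_all [mul_comm]

theorem weightSum_succ_false (n k : ℕ) :
    weightSum p00 p01 p10 p11 false (n + 1) k =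
      p00 * weightSum p00 p01 p10 p11 false n k + p10 * weightSum p00 p01 p10 p11 true n k :=
  weightSum_succ p00 p01 p10 p11 false n k

theorem weightSum_succ_true (n k : ℕ) :
    weightSum p00 p01 p10 p11 true (n + 1) (k + 1) =
      p01 * weightSum p00 p01 p10 p11 false n k + p11 * weightSum p00 p01 p10 p11 true n k :=
  weightSum_succ p00 p01 p10 p11 true n k

theorem weightSum_true_zero (n : ℕ) : weightSum p00 p01 p10 p11 true n 0 = 0 := by
  refine Finset.sum_eq_zero fun w hw => absurd (Finset.mem_filter.1 hw).2 ?_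
  rintro ⟨-, hlast, hvisits⟩
  rw [visitsS1, Finset.card_eq_zero, Finset.filter_eq_empty_iff] at hvisits
  exact hvisits (Finset.mem_univ _) hlast

theorem weightSum_eq_zero_of_lt (c : Bool) {n k : ℕ} (h : n < k) :
    weightSum p00 p01 p10 p11 c n k = 0 := by
  refine Finset.sum_eq_zero fun w hw => absurd (Finset.mem_filter.1 hw).2 ?_
  rintro ⟨hstart, -, hvisits⟩
  have hle : visitsS1 w ≤ n := by
    calc visitsS1 w ≤ (Finset.univ.erase (0 : Fin (n + 1))).card := by
          refine Finset.card_le_card fun i hi => Finset.mem_erase.2 ⟨?_, Finset.mem_univ _⟩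
          rintro rfl
          simp [hstart] at hi
      _ = n := by simp
  omega

theorem weightSum_false_zero (n : ℕ) : weightSum p00 p01 p10 p11 false n 0 = p00 ^ n := by
  induction n with
  | zero =>
    rw [weightSum, Finset.sum_filter, ← (Equiv.funUnique (Fin 1) Bool).symm.sum_comp,
      Fintype.sum_bool]
    simp [visitsS1, pathWeight, Fin.last]
  | succ n ih =>
    rw [weightSum_succ_false, ih, weightSum_true_zero, pow_succ]
    ring

/- Closed forms for the paths with `a + 1` visits to S1 and `b + 1` to S0 that end in S1
(`closedS1`) or in S0 (`closedS0`); `i + 1` is the number of runs of S1. -/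
def closedS1 (a b : ℕ) : ℝ :=
  ∑ i ∈ Finset.range (a + 1), choosePow p11 a i * choosePow p00 b i * p10 ^ i * p01 ^ (i + 1)

def closedS0 (a b : ℕ) : ℝ :=
  ∑ i ∈ Finset.range (a + 1),
    choosePow p11 a i * choosePow p00 b (i + 1) * p10 ^ (i + 1) * p01 ^ (i + 1)

theorem closedS1_zero_left (b : ℕ) : closedS1 p00 p01 p10 p11 0 b = p01 * p00 ^ b := by
  simp [closedS1, choosePow_zero_right, mul_comm]

theorem closedS0_zero_right (a : ℕ) : closedS0 p00 p01 p10 p11 a 0 = 0 := by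
  simp [closedS0, choosePow_eq_zero_of_lt]

theorem closedS0_succ_right (a b : ℕ) :
    closedS0 p00 p01 p10 p11 a (b + 1) =
      p00 * closedS0 p00 p01 p10 p11 a b + p10 * closedS1 p00 p01 p10 p11 a b := by
  simp only [closedS0, closedS1, choosePow_succ_succ, Finset.mul_sum, ← Finset.sum_add_distrib]
  refine Finset.sum_congr rfl fun i _ => ?_
  ring

theorem closedS1_eq_add_sum_range {a M : ℕ} (h : a ≤ M) (b : ℕ) :
    closedS1 p00 p01 p10 p11 a b = p11 ^ a * p00 ^ b * p01 +
      ∑ i ∈ Finset.range M, choosePow p11 a (i + 1) * choosePow p00 b (i + 1) *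
        p10 ^ (i + 1) * p01 ^ (i + 2) := by
  rw [closedS1, Finset.sum_range_succ', add_comm]
  congr 1
  · simp [choosePow_zero_right]
  · refine Finset.sum_subset (Finset.range_subset_range.2 h) fun i _ hi => ?_
    rw [choosePow_eq_zero_of_lt p11 (by simpa using hi)]
    simp

theorem closedS1_succ_left (a b : ℕ) :
    closedS1 p00 p01 p10 p11 (a + 1) b =
      p01 * closedS0 p00 p01 p10 p11 a b + p11 * closedS1 p00 p01 p10 p11 a b := by
  rw [closedS1_eq_add_sum_range p00 p01 p10 p11 le_rfl,
    closedS1_eq_add_sum_range p00 p01 p10 p11 (Nat.le_succ a), closedS0, mul_add,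
    Finset.mul_sum, Finset.mul_sum, add_left_comm, ← Finset.sum_add_distrib, pow_succ]
  simp only [choosePow_succ_succ]
  congr 1
  · ring
  · refine Finset.sum_congr rfl fun i _ => ?_
    ring

theorem weightSum_false_eq_closedS0 (a : ℕ)
    (hS1 : ∀ b, weightSum p00 p01 p10 p11 true (a + b + 1) (a + 1) = closedS1 p00 p01 p10 p11 a b)
    (b : ℕ) :
    weightSum p00 p01 p10 p11 false (a + b + 1) (a + 1) = closedS0 p00 p01 p10 p11 a b := by
  induction b with
  | zero =>
    rw [closedS0_zero_right, add_zero, weightSum_succ_false,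
      weightSum_eq_zero_of_lt _ _ _ _ _ (Nat.lt_succ_self a),
      weightSum_eq_zero_of_lt _ _ _ _ _ (Nat.lt_succ_self a), mul_zero, mul_zero, add_zero]
  | succ b ih =>
    rw [← add_assoc, weightSum_succ_false, ih, hS1, closedS0_succ_right]

theorem weightSum_true_eq_closedS1 (a b : ℕ) :
    weightSum p00 p01 p10 p11 true (a + b + 1) (a + 1) = closedS1 p00 p01 p10 p11 a b := by
  induction a generalizing b with
  | zero =>
    rw [zero_add, weightSum_succ_true, weightSum_false_zero, weightSum_true_zero,
      closedS1_zero_left, mul_zero, add_zero]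
  | succ a ih =>
    rw [Nat.add_right_comm a 1 b, weightSum_succ_true, ih,
      weightSum_false_eq_closedS0 p00 p01 p10 p11 a ih, closedS1_succ_left]

theorem closedS1_eq_sum_Icc (a b : ℕ) :
    closedS1 p00 p01 p10 p11 a b =
      ∑ j ∈ Finset.Icc 1 (min (a + 1) (b + 1)),
        (a.choose (j - 1) : ℝ) * p11 ^ (a + 1 - j) * p10 ^ (j - 1) *
          (b.choose (j - 1) : ℝ) * p01 ^ j * p00 ^ (b + 1 - j) := by
  rw [Nat.add_min_add_right, ← Finset.Ico_add_one_right_eq_Icc, Finset.sum_Ico_eq_sum_range,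
    Nat.add_sub_cancel, closedS1]
  refine (Finset.sum_subset (Finset.range_subset_range.2 (by omega : min a b + 1 ≤ a + 1))
    fun i hia hi => ?_).symm.trans (Finset.sum_congr rfl fun i _ => ?_)
  · have hb : b < i := by simp only [Finset.mem_range] at hia hi; omega
    rw [choosePow_eq_zero_of_lt p00 hb]
    simp
  · rw [choosePow, choosePow, Nat.add_sub_cancel_left, add_comm 1 i, Nat.add_sub_add_right,
      Nat.add_sub_add_right]
    ring

end

theorem stmt14 (p00 p01 p10 p11 : ℝ) (N k : ℕ) (hk0 : 0 < k) (hkN : k < N) :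
    ∑ w ∈ Finset.univ.filter (fun w : Fin N → Bool =>
        w ⟨0, by omega⟩ = false ∧ w ⟨N - 1, by omega⟩ = true ∧ visitsS1 w = k),
      pathWeight p00 p01 p10 p11 w =
    ∑ j ∈ Finset.Icc 1 (min k (N - k)),
        (Nat.choose (k - 1) (j - 1) : ℝ) * p11 ^ (k - j) * p10 ^ (j - 1) *
          (Nat.choose (N - k - 1) (j - 1) : ℝ) * p01 ^ j * p00 ^ (N - k - j) := by
  obtain ⟨a, rfl⟩ : ∃ a, k = a + 1 := ⟨k - 1, by omega⟩
  obtain ⟨b, rfl⟩ : ∃ b, N = a + b + 2 := ⟨N - (a + 1) - 1, by omega⟩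
  change weightSum p00 p01 p10 p11 true (a + b + 1) (a + 1) = _
  rw [weightSum_true_eq_closedS1, closedS1_eq_sum_Icc,
    show a + b + 2 - (a + 1) = b + 1 by omega, Nat.add_sub_cancel, Nat.add_sub_cancel]
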